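/- arXiv:1707.01145 — 5 statements merged into one kernel-verified Lean document; each statement's English description precedes it below -/
import Mathlib

section
/- Let V be a real vector space and let D ⊆ V be a convex, balanced (circled) subset. Define the internal closure of D as D̃ := {v ∈ V | for all r ∈ [0,1), r • v ∈ D}. Then D̃ is itself internally closed (i.e. the internal closure of D̃ equals D̃), and the Minkowski gauge functionals of D and of D̃ coincide: for every v ∈ V, gauge D v = gauge D̃ v. -/
open Pointwise


/-- The internal closure of a subset `D` of a real vector space:
`{v | ∀ r ∈ [0,1), r • v ∈ D}`. -/
def internalClosure {V : Type*} [AddCommGroup V] [Module ℝ V] (D : Set V) : Set V :=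
  {v : V | ∀ r : ℝ, r ∈ Set.Ico (0 : ℝ) 1 → r • v ∈ D}

/-- A set is internally closed if it equals its own internal closure, i.e. whenever
`r • v ∈ D` for all `r ∈ [0,1)` then `v ∈ D`. -/
def InternallyClosed {V : Type*} [AddCommGroup V] [Module ℝ V] (D : Set V) : Prop :=
  internalClosure D = D

/-- For a convex, balanced (circled) disk `D` in a real vector space, the internal closure of
`D` is itself internally closed, and the Minkowski gauge functionals of `D` and of its internal
closure coincide. -/
theorem internalClosure_internallyClosed_and_gauge_eq
    {V : Type*} [AddCommGroup V] [Module ℝ V] (D : Set V)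
    (hconv : Convex ℝ D) (hbal : Balanced ℝ D) :
    InternallyClosed (internalClosure D) ∧ ∀ v : V, gauge D v = gauge (internalClosure D) v := by
  have hsub : D ⊆ internalClosure D := fun v hv r hr =>
    hbal.smul_mem (by rw [Real.norm_eq_abs, abs_of_nonneg hr.1]; exact hr.2.le) hv
  have key : ∀ v : V, ∀ t : ℝ, 0 < t → v ∈ t • (internalClosure D : Set V) →
      ∀ r : ℝ, t < r → v ∈ r • D := by
    intro v t ht hv r htr
    rw [Set.mem_smul_set_iff_inv_smul_mem₀ ht.ne'] at hv
    have hr : 0 < r := ht.trans htr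
    rw [Set.mem_smul_set_iff_inv_smul_mem₀ hr.ne']
    have heq : r⁻¹ • v = (t / r) • (t⁻¹ • v) := by
      rw [smul_smul]; congr 1; field_simp
    rw [heq]
    exact hv (t / r) ⟨by positivity, (div_lt_one hr).2 htr⟩
  constructor
  · ext v
    simp only [internalClosure, Set.mem_setOf_eq]
    constructor
    · intro h t ht
      have hs : Real.sqrt t ∈ Set.Ico (0 : ℝ) 1 :=
        ⟨Real.sqrt_nonneg t, by
          rw [show (1 : ℝ) = Real.sqrt 1 by simp]
          exact Real.sqrt_lt_sqrt ht.1 ht.2⟩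
      have h2 := h _ hs _ hs
      rwa [smul_smul, Real.mul_self_sqrt ht.1] at h2
    · intro hv r hr s hs
      rw [smul_smul]
      exact hv _ ⟨mul_nonneg hs.1 hr.1,
        (mul_le_of_le_one_right hs.1 hr.2.le).trans_lt hs.2⟩
  · intro v
    unfold gauge
    have hbdd : ∀ S : Set V, BddBelow {r : ℝ | 0 < r ∧ v ∈ r • S} :=
      fun S => ⟨0, fun r hr => hr.1.le⟩
    have hDE : {r : ℝ | 0 < r ∧ v ∈ r • D} ⊆ {r : ℝ | 0 < r ∧ v ∈ r • internalClosure D} :=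
      fun r hr => ⟨hr.1, Set.smul_set_mono hsub hr.2⟩
    rcases Set.eq_empty_or_nonempty {r : ℝ | 0 < r ∧ v ∈ r • internalClosure D} with h | h
    · have hD : {r : ℝ | 0 < r ∧ v ∈ r • D} = ∅ :=
        Set.eq_empty_of_subset_empty (h ▸ hDE)
      rw [h, hD]
    · apply le_antisymm
      · -- sInf S_D ≤ sInf S_E
        apply le_csInf h
        rintro t ⟨ht, hv⟩
        apply le_of_forall_pos_le_add
        intro ε hε
        exact csInf_le (hbdd D) ⟨by linarith, key v t ht hv (t + ε) (by linarith)⟩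
      · -- sInf S_E ≤ sInf S_D
        rcases Set.eq_empty_or_nonempty {r : ℝ | 0 < r ∧ v ∈ r • D} with hD | hD
        · exfalso
          obtain ⟨t, ht, hv⟩ := h
          have hmem : (t + 1) ∈ {r : ℝ | 0 < r ∧ v ∈ r • D} :=
            ⟨by linarith, key v t ht hv (t + 1) (by linarith)⟩
          rw [hD] at hmem
          exact hmem
        · exact csInf_le_csInf (hbdd _) hD hDE
end

section
/- An additive functor F : Q → Q' between quasi-abelian categories is strictly exact if and only if F preserves finite limits and F sends strict epimorphisms to strict epimorphisms. -/
open CategoryTheory CategoryTheory.Limits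
open ZeroObject

universe v u v₂ u₂

/-- A morphism is a strict epimorphism if it is a cokernel of some morphism. -/
def IsStrictEpi {C : Type u} [Category.{v} C] [HasZeroMorphisms C]
    {X Y : C} (f : X ⟶ Y) : Prop :=
  ∃ (Z : C) (g : Z ⟶ X) (w : g ≫ f = 0), Nonempty (IsColimit (CokernelCofork.ofπ f w))

/-- A morphism is a strict monomorphism if it is a kernel of some morphism. -/
def IsStrictMono {C : Type u} [Category.{v} C] [HasZeroMorphisms C]
    {X Y : C} (f : X ⟶ Y) : Prop :=
  ∃ (Z : C) (g : Y ⟶ Z) (w : f ≫ g = 0), Nonempty (IsLimit (KernelFork.ofι f w))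

/-- A quasi-abelian category: an additive category (preadditive with all finite limits
and colimits) in which strict epimorphisms are stable under pullback and strict
monomorphisms are stable under pushout. -/
class QuasiAbelian (C : Type u) [Category.{v} C] [Preadditive C]
    [HasFiniteLimits C] [HasFiniteColimits C] : Prop where
  pullback_strictEpi : ∀ {X Y Z : C} (f : X ⟶ Z) (g : Y ⟶ Z),
    IsStrictEpi f → IsStrictEpi (pullback.snd f g)
  pushout_strictMono : ∀ {X Y Z : C} (f : X ⟶ Y) (g : X ⟶ Z),
    IsStrictMono f → IsStrictMono (pushout.inr f g)

/-- A null sequence `f : X ⟶ Y`, `g : Y ⟶ Z` (with `f ≫ g = 0`) is strictly exact if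
the induced morphism `X ⟶ ker g` is a strict epimorphism. -/
def StrictlyExact {C : Type u} [Category.{v} C] [Preadditive C] [HasFiniteLimits C]
    {X Y Z : C} (f : X ⟶ Y) (g : Y ⟶ Z) (w : f ≫ g = 0) : Prop :=
  IsStrictEpi (kernel.lift g f w)

/-- A functor between quasi-abelian categories is strictly exact if it sends every strictly
exact null sequence to a strictly exact null sequence. -/
def CategoryTheory.Functor.IsStrictlyExact {C : Type u} [Category.{v} C] [Preadditive C] [HasFiniteLimits C]
    {D : Type u₂} [Category.{v₂} D] [Preadditive D] [HasFiniteLimits D]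
    (F : C ⥤ D) : Prop :=
  ∀ ⦃X Y Z : C⦄ (f : X ⟶ Y) (g : Y ⟶ Z) (w : f ≫ g = 0)
    (w' : F.map f ≫ F.map g = 0),
    StrictlyExact f g w → StrictlyExact (F.map f) (F.map g) w'

section Aux


variable {C : Type u} [Category.{v} C] [HasZeroMorphisms C]

lemma IsStrictEpi.epi {X Y : C} {f : X ⟶ Y} (h : IsStrictEpi f) : Epi f := by
  obtain ⟨Z, g, w, ⟨hc⟩⟩ := h
  exact ⟨fun a b hab => Cofork.IsColimit.hom_ext hc hab⟩

lemma IsStrictEpi.comp_iso {X Y Y' : C} {f : X ⟶ Y} (h : IsStrictEpi f)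
    (i : Y ⟶ Y') [IsIso i] : IsStrictEpi (f ≫ i) := by
  obtain ⟨Z, g, w, ⟨hc⟩⟩ := h
  refine ⟨Z, g, by rw [← Category.assoc, w, zero_comp], ⟨?_⟩⟩
  refine Cofork.IsColimit.mk _ (fun s => inv i ≫ hc.desc s) (fun s => ?_) (fun s m hm => ?_)
  · have : f ≫ hc.desc s = Cofork.π s := hc.fac s WalkingParallelPair.one
    simpa [Category.assoc] using this
  · have h1 : f ≫ i ≫ m = Cofork.π s := by simpa [Category.assoc] using hm
    have h2 : f ≫ hc.desc s = Cofork.π s := hc.fac s WalkingParallelPair.one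
    have h3 : i ≫ m = hc.desc s := Cofork.IsColimit.hom_ext hc (h1.trans h2.symm)
    rw [← h3]; simp

lemma isStrictEpi_id (X : C) : IsStrictEpi (𝟙 X) := by
  refine ⟨X, 0, by simp, ⟨?_⟩⟩
  refine Cofork.IsColimit.mk _ (fun s => Cofork.π s) (fun s => by simp) (fun s m hm => by simpa using hm)

lemma isStrictEpi_of_isIso {X Y : C} (f : X ⟶ Y) [IsIso f] : IsStrictEpi f := by
  simpa using (isStrictEpi_id X).comp_iso f

open ZeroObject in
lemma isZero_isStrictEpi_to {V W : C} (hW : IsZero W) (e : V ⟶ W) : IsStrictEpi e := by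
  refine ⟨V, 𝟙 V, by rw [Category.id_comp]; exact hW.eq_zero_of_tgt e, ⟨?_⟩⟩
  refine Cofork.IsColimit.mk _ (fun s => 0) (fun s => ?_) (fun s m hm => hW.eq_of_src _ _)
  · have hs : Cofork.π s = 0 := by
      have hcond : 𝟙 V ≫ Cofork.π s = 0 ≫ Cofork.π s := s.condition
      rw [Category.id_comp, zero_comp] at hcond
      exact hcond
    simp [hs]

lemma IsStrictEpi.isIso_of_mono {X Y : C} {f : X ⟶ Y} (h : IsStrictEpi f) [Mono f] :
    IsIso f := by
  obtain ⟨Z, g, w, ⟨hc⟩⟩ := h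
  have hg : g = 0 := by
    have := w
    rw [← zero_comp (f := f)] at this
    exact (cancel_mono f).mp this
  have hepi : Epi f := IsStrictEpi.epi ⟨Z, g, w, ⟨hc⟩⟩
  have hd : ∃ d : Y ⟶ X, f ≫ d = 𝟙 X := by
    refine ⟨hc.desc (Cofork.ofπ (𝟙 X) (by simp [hg])), ?_⟩
    exact hc.fac _ WalkingParallelPair.one
  obtain ⟨d, hd⟩ := hd
  have hd2 : d ≫ f = 𝟙 Y := by
    rw [← cancel_epi f, ← Category.assoc, hd, Category.id_comp, Category.comp_id]
  exact ⟨d, hd, hd2⟩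

end Aux

/-- An additive functor `F : Q → Q'` between quasi-abelian categories is strictly exact
iff it preserves finite limits and sends strict epimorphisms to strict epimorphisms. -/
theorem isStrictlyExact_iff_preservesFiniteLimits_and_strictEpi
    {C : Type u} [Category.{v} C] [Preadditive C] [HasFiniteLimits C] [HasFiniteColimits C]
    [QuasiAbelian C]
    {D : Type u₂} [Category.{v₂} D] [Preadditive D] [HasFiniteLimits D] [HasFiniteColimits D]
    [QuasiAbelian D]
    (F : C ⥤ D) [F.Additive] :
    F.IsStrictlyExact ↔
      (Nonempty (PreservesFiniteLimits F) ∧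
        ∀ ⦃X Y : C⦄ (f : X ⟶ Y), IsStrictEpi f → IsStrictEpi (F.map f)) := by
  constructor
  · intro hF
    haveI : HasZeroObject C := hasZeroObject_of_hasTerminal_object
    haveI : HasZeroObject D := hasZeroObject_of_hasTerminal_object
    constructor
    · -- F preserves finite limits
      have hker : ∀ {X Y : C} (f : X ⟶ Y), IsIso (kernelComparison f F) := by
        intro X Y f
        have w : kernel.ι f ≫ f = 0 := kernel.condition f
        have w' : F.map (kernel.ι f) ≫ F.map f = 0 := by
          rw [← F.map_comp, w, F.map_zero]
        have hse : StrictlyExact (kernel.ι f) f w := by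
          have h1 : kernel.lift f (kernel.ι f) w = 𝟙 (kernel f) := by ext; simp
          rw [StrictlyExact, h1]
          exact isStrictEpi_id _
        have h2 := hF (kernel.ι f) f w w' hse
        have hcomp : kernelComparison f F = kernel.lift (F.map f) (F.map (kernel.ι f)) w' := by
          ext; simp [kernelComparison]
        -- now show `F.map (kernel.ι f)` is a monomorphism
        have wm : (0 : (0 : C) ⟶ kernel f) ≫ kernel.ι f = 0 := zero_comp
        have wm' : F.map (0 : (0 : C) ⟶ kernel f) ≫ F.map (kernel.ι f) = 0 := by
          rw [F.map_zero, zero_comp]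
        have hker_zero : IsZero (kernel (kernel.ι f)) := by
          rw [IsZero.iff_id_eq_zero]
          have hι : kernel.ι (kernel.ι f) = 0 := by
            rw [← cancel_mono (kernel.ι f)]
            simp
          rw [← cancel_mono (kernel.ι (kernel.ι f)), Category.id_comp, zero_comp, hι]
        have hsem : StrictlyExact (0 : (0 : C) ⟶ kernel f) (kernel.ι f) wm :=
          isZero_isStrictEpi_to hker_zero _
        have h3 := hF _ _ wm wm' hsem
        have hlift0 : kernel.lift (F.map (kernel.ι f)) (F.map (0 : (0 : C) ⟶ kernel f)) wm'
            = 0 := by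
          ext; simp
        rw [StrictlyExact, hlift0] at h3
        haveI := h3.epi
        have hz : IsZero (kernel (F.map (kernel.ι f))) :=
          IsZero.of_epi_eq_zero (0 : F.obj (0 : C) ⟶ kernel (F.map (kernel.ι f))) rfl
        haveI hmono : Mono (F.map (kernel.ι f)) :=
          Preadditive.mono_of_isZero_kernel _ hz
        haveI : Mono (kernelComparison f F) := by
          rw [hcomp]
          exact mono_of_mono_fac (kernel.lift_ι _ _ _)
        rw [StrictlyExact, ← hcomp] at h2
        exact h2.isIso_of_mono
      haveI : ∀ {X Y : C} (f : X ⟶ Y), PreservesLimit (parallelPair f 0) F := by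
        intro X Y f
        haveI := hker f
        exact PreservesKernel.of_iso_comparison F f
      haveI : HasBinaryBiproducts C := HasBinaryBiproducts.of_hasBinaryProducts
      exact ⟨Functor.preservesFiniteLimits_of_preservesKernels F⟩
    · -- F preserves strict epimorphisms
      intro X Y f hf
      have w : f ≫ (0 : Y ⟶ Y) = 0 := comp_zero
      have w' : F.map f ≫ F.map (0 : Y ⟶ Y) = 0 := by rw [F.map_zero, comp_zero]
      have hse : StrictlyExact f (0 : Y ⟶ Y) w := by
        have h1 : kernel.lift (0 : Y ⟶ Y) f w = f ≫ inv (kernel.ι (0 : Y ⟶ Y)) := by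
          rw [IsIso.eq_comp_inv, kernel.lift_ι]
        rw [StrictlyExact, h1]
        exact hf.comp_iso _
      have h2 := hF f (0 : Y ⟶ Y) w w' hse
      have hz : F.map (0 : Y ⟶ Y) = 0 := F.map_zero _ _
      have wι : 𝟙 (F.obj Y) ≫ F.map (0 : Y ⟶ Y) = 0 := by rw [hz, comp_zero]
      haveI : IsIso (kernel.ι (F.map (0 : Y ⟶ Y))) := by
        refine ⟨kernel.lift _ (𝟙 (F.obj Y)) wι, ?_, kernel.lift_ι _ _ _⟩
        rw [← cancel_mono (kernel.ι (F.map (0 : Y ⟶ Y)))]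
        simp
      have hfac : F.map f = kernel.lift (F.map (0 : Y ⟶ Y)) (F.map f) w'
          ≫ kernel.ι (F.map (0 : Y ⟶ Y)) := (kernel.lift_ι _ _ _).symm
      rw [hfac]
      exact (h2 : IsStrictEpi _).comp_iso _
  · rintro ⟨⟨hlim⟩, hepi⟩
    intro X Y Z f g w w' hse
    haveI := hlim
    haveI : IsIso (kernelComparison g F) := inferInstance
    have hc : kernel.lift (F.map g) (F.map f) w' =
        F.map (kernel.lift g f w) ≫ kernelComparison g F := by
      ext
      simp [← F.map_comp]
    rw [StrictlyExact, hc]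
    exact (hepi _ hse).comp_iso _
end

section
/- Let C be a quasi-abelian category which is closed symmetric monoidal (with all finite limits and colimits). Then every morphism φ : M' → M'' of commutative monoid objects in C factors as φ = i ∘ π in the category of commutative monoid objects, where the morphism in C underlying π is a strict epimorphism and the morphism in C underlying i is a monomorphism. -/
open CategoryTheory CategoryTheory.Limits

universe v u

/-!
The factorization is the coimage factorization `φ = c ≫ i` with `c = coker (ker φ)`, a strict
epimorphism. In a quasi-abelian category `i` is a monomorphism: if `g ≫ i = 0`, the pullback of
`c` along `g` is again a strict epimorphism, and `g` vanishes after precomposing with it.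
Since tensoring on either side is a left adjoint (closedness and the braiding), it preserves
strong epimorphisms, so `c ⊗ c` is one; the multiplication of the coimage is then the diagonal
filler of the square `(μ ≫ c) ≫ i = (c ⊗ c) ≫ (i ⊗ i) ≫ μ`, and the monoid axioms hold because
they hold after composing with the monomorphism `i`.
-/

open MonoidalCategory MonObj

lemma IsStrictEpi.strongEpi {C : Type u} [Category.{v} C] [HasZeroMorphisms C]
    {X Y : C} {f : X ⟶ Y} (h : IsStrictEpi f) : StrongEpi f := by
  obtain ⟨_, _, _, ⟨hc⟩⟩ := h
  have : IsRegularEpi f := isRegularEpi_of_regularEpi (Cofork.IsColimit.regularEpi hc)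
  infer_instance

lemma isStrictEpi_coimage_π {C : Type u} [Category.{v} C] [HasZeroMorphisms C]
    {X Y : C} (f : X ⟶ Y) [HasKernel f] [HasCokernel (kernel.ι f)] :
    IsStrictEpi (Abelian.coimage.π f) :=
  ⟨_, kernel.ι f, cokernel.condition _, ⟨cokernelIsCokernel _⟩⟩

lemma QuasiAbelian.mono_factorThruCoimage {C : Type u} [Category.{v} C] [Preadditive C]
    [HasFiniteLimits C] [HasFiniteColimits C] [QuasiAbelian C] {X Y : C} (f : X ⟶ Y) :
    Mono (Abelian.factorThruCoimage f) := by
  refine Preadditive.mono_of_cancel_zero _ fun {T} g hg => ?_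
  let c := Abelian.coimage.π f
  have : StrongEpi (pullback.snd c g) :=
    (QuasiAbelian.pullback_strictEpi c g (isStrictEpi_coimage_π f)).strongEpi
  have hfst : pullback.fst c g ≫ f = 0 := by
    simpa [hg, c] using pullback.condition (f := c) (g := g) =≫ Abelian.factorThruCoimage f
  have hsnd : pullback.snd c g ≫ g = 0 := by
    rw [← pullback.condition, ← kernel.lift_ι f _ hfst, Category.assoc, cokernel.condition,
      comp_zero]
  exact zero_of_epi_comp _ hsnd

section Monoidal

variable {C : Type u} [Category.{v} C] [MonoidalCategory C]

instance strongEpi_whiskerLeft [MonoidalClosed C] (X : C) {A B : C} (f : A ⟶ B) [StrongEpi f] :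
    StrongEpi (X ◁ f) :=
  (ihom.adjunction X).strongEpi_map_of_strongEpi f

instance strongEpi_whiskerRight [BraidedCategory C] [MonoidalClosed C] {A B : C} (f : A ⟶ B)
    [StrongEpi f] (X : C) : StrongEpi (f ▷ X) :=
  (Adjunction.ofIsLeftAdjoint (tensorRight X)).strongEpi_map_of_strongEpi f

instance strongEpi_tensorHom [BraidedCategory C] [MonoidalClosed C] {A B A' B' : C} (f : A ⟶ B)
    (g : A' ⟶ B') [StrongEpi f] [StrongEpi g] : StrongEpi (f ⊗ₘ g) := by
  rw [MonoidalCategory.tensorHom_def]; infer_instance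

section OfMono

variable {N P : C} [MonObj P] (i : N ⟶ P) [Mono i] (one : 𝟙_ C ⟶ N) (mul : N ⊗ N ⟶ N)
  (one_comp : one ≫ i = η[P]) (mul_comp : mul ≫ i = (i ⊗ₘ i) ≫ μ[P])

include one_comp mul_comp

abbrev MonObj.ofMono : MonObj N where
  one := one
  mul := mul
  one_mul := by
    rw [← cancel_mono i, Category.assoc, mul_comp, whiskerRight_comp_tensorHom_assoc, one_comp,
      tensorHom_def', Category.assoc, MonObj.one_mul, leftUnitor_naturality]
  mul_one := by
    rw [← cancel_mono i, Category.assoc, mul_comp, whiskerLeft_comp_tensorHom_assoc, one_comp,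
      MonoidalCategory.tensorHom_def, Category.assoc, MonObj.mul_one, rightUnitor_naturality]
  mul_assoc := by
    rw [← cancel_mono i]
    simp only [Category.assoc]
    rw [mul_comp, whiskerRight_comp_tensorHom_assoc, mul_comp, whiskerLeft_comp_tensorHom_assoc,
      mul_comp, ← tensorHom_comp_whiskerRight_assoc, MonObj.mul_assoc, associator_naturality_assoc,
      tensorHom_comp_whiskerLeft_assoc]

lemma MonObj.isMonHom_ofMono :
    letI := MonObj.ofMono i one mul one_comp mul_comp
    IsMonHom i :=
  letI := MonObj.ofMono i one mul one_comp mul_comp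
  ⟨one_comp, mul_comp⟩

lemma IsCommMonObj.ofMono [BraidedCategory C] [IsCommMonObj P] :
    letI := MonObj.ofMono i one mul one_comp mul_comp
    IsCommMonObj N :=
  letI := MonObj.ofMono i one mul one_comp mul_comp
  have := MonObj.isMonHom_ofMono i one mul one_comp mul_comp
  ⟨by rw [← cancel_mono i, Category.assoc, IsMonHom.mul_hom i,
    ← BraidedCategory.braiding_naturality_assoc, IsCommMonObj.mul_comm]⟩

end OfMono

section Factorization

variable {M N P : C} [MonObj M] [MonObj P] (c : M ⟶ N) (i : N ⟶ P) [IsMonHom (c ≫ i)]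

lemma commSq_mul_tensorHom : CommSq (μ[M] ≫ c) (c ⊗ₘ c) i ((i ⊗ₘ i) ≫ μ[P]) :=
  ⟨by rw [Category.assoc, IsMonHom.mul_hom (c ≫ i), tensorHom_comp_tensorHom_assoc]⟩

variable [StrongEpi (c ⊗ₘ c)] [Mono i]

noncomputable abbrev MonObj.ofFactorization : MonObj N :=
  MonObj.ofMono i (η[M] ≫ c) (commSq_mul_tensorHom c i).lift
    (by rw [Category.assoc, IsMonHom.one_hom]) (commSq_mul_tensorHom c i).fac_right

lemma MonObj.isMonHom_ofFactorization_left :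
    letI := MonObj.ofFactorization c i
    IsMonHom c :=
  letI := MonObj.ofFactorization c i
  ⟨rfl, (commSq_mul_tensorHom c i).fac_left.symm⟩

lemma MonObj.isMonHom_ofFactorization_right :
    letI := MonObj.ofFactorization c i
    IsMonHom i :=
  MonObj.isMonHom_ofMono ..

lemma IsCommMonObj.ofFactorization [BraidedCategory C] [IsCommMonObj P] :
    letI := MonObj.ofFactorization c i
    IsCommMonObj N :=
  IsCommMonObj.ofMono ..

end Factorization
end Monoidal

/-- In a closed symmetric monoidal quasi-abelian category (with all finite limits and
colimits), every morphism `φ : M' ⟶ M''` of commutative monoid objects factors as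
`φ = π ≫ i` in the category of commutative monoid objects, where the underlying morphism
of `π` is a strict epimorphism and the underlying morphism of `i` is a monomorphism. -/
theorem commMon_factorization
    {C : Type u} [Category.{v} C] [Preadditive C]
    [HasFiniteLimits C] [HasFiniteColimits C] [QuasiAbelian C]
    [MonoidalCategory C] [SymmetricCategory C] [MonoidalClosed C]
    {M' M'' : CommMon C} (φ : M' ⟶ M'') :
    ∃ (N : CommMon C) (π : M' ⟶ N) (i : N ⟶ M''),
      π ≫ i = φ ∧ IsStrictEpi π.hom.hom ∧ Mono i.hom.hom := by
  let c : M'.X ⟶ Abelian.coimage φ.hom.hom := Abelian.coimage.π φ.hom.hom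
  let i : Abelian.coimage φ.hom.hom ⟶ M''.X := Abelian.factorThruCoimage φ.hom.hom
  have hc : IsStrictEpi c := isStrictEpi_coimage_π _
  have := hc.strongEpi
  have hi : Mono i := QuasiAbelian.mono_factorThruCoimage _
  have hfac : c ≫ i = φ.hom.hom := Abelian.coimage.fac _
  have : IsMonHom (c ≫ i) := by rw [hfac]; exact φ.hom.isMonHom_hom
  let := MonObj.ofFactorization c i
  have := MonObj.isMonHom_ofFactorization_left c i
  have := MonObj.isMonHom_ofFactorization_right c i
  have := IsCommMonObj.ofFactorization c i
  exact ⟨.mk (Abelian.coimage φ.hom.hom), CommMon.homMk (Mon.ofHom c),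
    CommMon.homMk (Mon.ofHom i), CommMon.hom_ext _ _ hfac, hc, hi⟩
end

section
/- Let E be a real Banach space, let (P, ≤) be a preorder in which every countable subset has an upper bound, and let (K_j)_{j ∈ P} be a family of closed linear subspaces of E which is monotone, i.e. K_j ⊆ K_k whenever j ≤ k. Then the union ⋃_{j ∈ P} K_j is a closed linear subspace of E. -/
/-- Let `E` be a real Banach space, `P` a preorder in which every countable subset has an
upper bound, and `K : P → Submodule ℝ E` a monotone family of closed linear subspaces.
Then the union `⋃ j, K j` is a closed linear subspace of `E`: it is closed, and it is the
underlying set of a linear subspace. -/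
theorem union_closed_subspaces_of_countably_directed
    {E : Type*} [NormedAddCommGroup E] [NormedSpace ℝ E] [CompleteSpace E]
    {P : Type*} [Preorder P]
    (hP : ∀ S : Set P, S.Countable → ∃ ub : P, ∀ i ∈ S, i ≤ ub)
    (K : P → Submodule ℝ E)
    (hclosed : ∀ j : P, IsClosed (K j : Set E))
    (hmono : Monotone K) :
    IsClosed (⋃ j : P, (K j : Set E)) ∧
      ∃ W : Submodule ℝ E, (W : Set E) = ⋃ j : P, (K j : Set E) := by
  obtain ⟨p0, -⟩ := hP ∅ Set.countable_empty
  have hne : Nonempty P := ⟨p0⟩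
  have hdir : Directed (· ≤ ·) K := by
    intro i j
    obtain ⟨ub, hub⟩ := hP {i, j} (((Set.countable_singleton j).insert i))
    exact ⟨ub, hmono (hub i (by simp)), hmono (hub j (by simp))⟩
  constructor
  · rw [← isSeqClosed_iff_isClosed]
    intro x a hx hlim
    choose j hj using fun n => Set.mem_iUnion.mp (hx n)
    obtain ⟨ub, hub⟩ := hP (Set.range j) (Set.countable_range j)
    have : ∀ n, x n ∈ (K ub : Set E) := fun n =>
      hmono (hub (j n) (Set.mem_range_self n)) (hj n)
    exact Set.mem_iUnion.mpr ⟨ub, (hclosed ub).mem_of_tendsto hlim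
      (Filter.Eventually.of_forall this)⟩
  · exact ⟨⨆ j, K j, Submodule.coe_iSup_of_directed K hdir⟩
end

section
/- Let Q be a quasi-abelian category with enough projectives and let 𝒫 be a sufficiently large class of projective objects. Suppose given a commutative diagram consisting of a null sequence Q^k → Q^{k+1} → Q^{k+2} (composite zero) on the bottom, morphisms d'_{k+1} : P^{k+1} → P^{k+2} on top, and vertical morphisms P^{k+1} → Q^{k+1}, P^{k+2} → Q^{k+2} which are strict epimorphisms, such that the induced morphism ker d'_{k+1} → ker d_{k+1} is a strict epimorphism. Then there exist an object P^k ∈ 𝒫, a morphism d'_k : P^k → P^{k+1} with d'_{k+1} ∘ d'_k = 0, and a strict epimorphism P^k → Q^k making the extended diagram commute, such that: (a) the induced morphism ker d'_k → ker d_k is a strict epimorphism, and (b) for every projective object P of Q the induced map of three-term complexes Hom(P, P^k) → Hom(P, P^{k+1}) → Hom(P, P^{k+2}) to Hom(P, Q^k) → Hom(P, Q^{k+1}) → Hom(P, Q^{k+2}) induces an isomorphism of cohomology (kernel modulo image) at the middle term. -/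
open CategoryTheory CategoryTheory.Limits

universe v u

/-- An object `P` is projective (in the strict sense) if every morphism from `P` lifts
along every strict epimorphism, i.e. `Hom(P, −)` sends strict epimorphisms to
surjections. -/
def IsStrictProjective {C : Type u} [Category.{v} C] [HasZeroMorphisms C] (P : C) : Prop :=
  ∀ ⦃X Y : C⦄ (f : X ⟶ Y), IsStrictEpi f → ∀ g : P ⟶ Y, ∃ h : P ⟶ X, h ≫ f = g

/-- A category has enough (strict) projectives if every object is the target of a strict
epimorphism from a projective object. -/
def HasEnoughStrictProjectives (C : Type u) [Category.{v} C] [HasZeroMorphisms C] : Prop :=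
  ∀ X : C, ∃ (P : C) (p : P ⟶ X), IsStrictProjective P ∧ IsStrictEpi p

attribute [local instance] CategoryTheory.Limits.HasFiniteBiproducts.of_hasFiniteProducts
attribute [local instance] CategoryTheory.Limits.hasBinaryBiproducts_of_finite_biproducts

/-- A class `Ps` of objects is a sufficiently large class of projectives: every member is
projective, `Ps` is closed under finite direct sums, and every projective object is a
retract of a member of `Ps`. -/
structure IsSufficientlyLarge {C : Type u} [Category.{v} C] [Preadditive C]
    [HasFiniteLimits C] [HasFiniteColimits C] (Ps : Set C) : Prop where
  projective : ∀ P ∈ Ps, IsStrictProjective P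
  biprod_mem : ∀ P Q : C, P ∈ Ps → Q ∈ Ps → (P ⊞ Q) ∈ Ps
  retract : ∀ X : C, IsStrictProjective X →
    ∃ P ∈ Ps, ∃ (i : X ⟶ P) (r : P ⟶ X), i ≫ r = 𝟙 X



namespace AddKillAux

variable {C : Type u} [Category.{v} C]

section ZeroM
variable [HasZeroMorphisms C]

theorem desc_fac {X Y K : C} {f : X ⟶ Y} {k : K ⟶ X} {w : k ≫ f = 0}
    (hc : IsColimit (CokernelCofork.ofπ f w)) {T : C} (t : X ⟶ T) (ht : k ≫ t = 0) :
    f ≫ hc.desc (CokernelCofork.ofπ t ht) = t := by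
  simpa using hc.fac (CokernelCofork.ofπ t ht) WalkingParallelPair.one

theorem epi_of_isStrictEpi {X Y : C} {f : X ⟶ Y} (h : IsStrictEpi f) : Epi f := by
  obtain ⟨Z, g, w, ⟨hc⟩⟩ := h
  constructor
  intro T u v huv
  exact Cofork.IsColimit.hom_ext hc (by simpa using huv)

theorem isStrictEpi_of_epi_comp {X Y Z : C} (g : X ⟶ Y) (f : Y ⟶ Z) [Epi g]
    (h : IsStrictEpi (g ≫ f)) : IsStrictEpi f := by
  obtain ⟨W, k, w, ⟨hc⟩⟩ := h
  refine ⟨W, k ≫ g, by rw [Category.assoc, w], ⟨?_⟩⟩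
  have pf : ∀ {T : C} (t : Y ⟶ T), (k ≫ g) ≫ t = 0 → k ≫ (g ≫ t) = 0 := by
    intro T t ht; rw [← Category.assoc, ht]
  refine CokernelCofork.IsColimit.ofπ f _
    (fun {T} t ht => hc.desc (CokernelCofork.ofπ (g ≫ t) (pf t ht))) ?_ ?_
  · intro T t ht
    have h1 := desc_fac hc (g ≫ t) (pf t ht)
    rw [Category.assoc] at h1
    exact (cancel_epi g).mp h1
  · intro T t ht m hm
    apply Cofork.IsColimit.hom_ext hc
    have h1 := desc_fac hc (g ≫ t) (pf t ht)
    simpa [Category.assoc, hm] using h1.symm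

end ZeroM

section Pre
variable [Preadditive C]

theorem isStrictEpi_of_section {X Y : C} (r : X ⟶ Y) (i : Y ⟶ X) (hi : i ≫ r = 𝟙 Y) :
    IsStrictEpi r := by
  refine ⟨X, 𝟙 X - r ≫ i, by simp [Preadditive.sub_comp, Category.assoc, hi], ⟨?_⟩⟩
  refine CokernelCofork.IsColimit.ofπ r _ (fun {T} t ht => i ≫ t) ?_ ?_
  · intro T t ht
    have h1 : t - r ≫ i ≫ t = 0 := by
      simpa [Preadditive.sub_comp, Category.assoc] using ht
    exact (sub_eq_zero.mp h1).symm
  · intro T t ht m hm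
    show m = i ≫ t
    conv_rhs => rw [← hm]
    rw [← Category.assoc, hi, Category.id_comp]

variable [HasFiniteLimits C] [HasFiniteColimits C] [QuasiAbelian C]

theorem isStrictEpi_comp {X Y Z : C} {f : X ⟶ Y} {g : Y ⟶ Z}
    (hf : IsStrictEpi f) (hg : IsStrictEpi g) : IsStrictEpi (f ≫ g) := by
  obtain ⟨K, k, wk, ⟨hck⟩⟩ := hf
  obtain ⟨H, h, wh, ⟨hch⟩⟩ := hg
  haveI : Epi f := epi_of_isStrictEpi ⟨K, k, wk, ⟨hck⟩⟩
  haveI : Epi g := epi_of_isStrictEpi ⟨H, h, wh, ⟨hch⟩⟩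
  haveI hsndEpi : Epi (pullback.snd f h) :=
    epi_of_isStrictEpi (QuasiAbelian.pullback_strictEpi f h ⟨K, k, wk, ⟨hck⟩⟩)
  refine ⟨K ⊞ pullback f h, biprod.desc k (pullback.fst f h), ?_, ⟨?_⟩⟩
  · apply biprod.hom_ext'
    · rw [biprod.inl_desc_assoc, ← Category.assoc, wk, zero_comp, comp_zero]
    · rw [biprod.inr_desc_assoc, ← Category.assoc, pullback.condition,
        Category.assoc, wh, comp_zero, comp_zero]
  · have pf1 : ∀ {T : C} (t : X ⟶ T), biprod.desc k (pullback.fst f h) ≫ t = 0 → k ≫ t = 0 := by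
      intro T t ht
      rw [← biprod.inl_desc k (pullback.fst f h), Category.assoc, ht, comp_zero]
    have pf1' : ∀ {T : C} (t : X ⟶ T), biprod.desc k (pullback.fst f h) ≫ t = 0 →
        pullback.fst f h ≫ t = 0 := by
      intro T t ht
      rw [← biprod.inr_desc k (pullback.fst f h), Category.assoc, ht, comp_zero]
    have pf2 : ∀ {T : C} (t : X ⟶ T) (ht : biprod.desc k (pullback.fst f h) ≫ t = 0),
        h ≫ hck.desc (CokernelCofork.ofπ t (pf1 t ht)) = 0 := by
      intro T t ht
      apply (cancel_epi (pullback.snd f h)).mp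
      rw [comp_zero, ← Category.assoc, ← pullback.condition, Category.assoc,
        desc_fac hck t (pf1 t ht), pf1' t ht]
    refine CokernelCofork.IsColimit.ofπ (f ≫ g) _
      (fun {T} t ht => hch.desc (CokernelCofork.ofπ
        (hck.desc (CokernelCofork.ofπ t (pf1 t ht))) (pf2 t ht))) ?_ ?_
    · intro T t ht
      rw [Category.assoc, desc_fac hch _ (pf2 t ht), desc_fac hck t (pf1 t ht)]
    · intro T t ht m hm
      haveI : Epi (f ≫ g) := epi_comp f g
      apply (cancel_epi (f ≫ g)).mp
      rw [hm, Category.assoc, desc_fac hch _ (pf2 t ht), desc_fac hck t (pf1 t ht)]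

theorem isStrictEpi_of_comp {W X Y : C} (g : W ⟶ X) (f : X ⟶ Y)
    (h : IsStrictEpi (g ≫ f)) : IsStrictEpi f := by
  have hsnd : IsStrictEpi (pullback.snd (g ≫ f) f) :=
    QuasiAbelian.pullback_strictEpi (g ≫ f) f h
  have hσ : pullback.lift (𝟙 W) g (by simp) ≫ pullback.fst (g ≫ f) f = 𝟙 W :=
    pullback.lift_fst _ _ _
  have hfst : IsStrictEpi (pullback.fst (g ≫ f) f) :=
    isStrictEpi_of_section _ _ hσ
  have hc : IsStrictEpi (pullback.fst (g ≫ f) f ≫ g ≫ f) := isStrictEpi_comp hfst h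
  rw [pullback.condition] at hc
  haveI := epi_of_isStrictEpi hsnd
  exact isStrictEpi_of_epi_comp _ _ hc

theorem cover (henough : HasEnoughStrictProjectives C) {Ps : Set C}
    (hPs : IsSufficientlyLarge Ps) (X : C) :
    ∃ B ∈ Ps, IsStrictProjective B ∧ ∃ b : B ⟶ X, IsStrictEpi b := by
  obtain ⟨P', π, hP', hπ⟩ := henough X
  obtain ⟨B, hB, i, r, hir⟩ := hPs.retract P' hP'
  exact ⟨B, hB, hPs.projective B hB, r ≫ π,
    isStrictEpi_comp (isStrictEpi_of_section r i hir) hπ⟩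

end Pre
end AddKillAux

/-- (The add/kill lemma.)  Let `C` be a quasi-abelian category with enough projectives and
`Ps` a sufficiently large class of projectives.  Suppose given a null sequence
`Qk →(dk) Qk1 →(dk1) Qk2`, a morphism `d'k1 : Pk1 ⟶ Pk2`, and strict epimorphisms
`p1 : Pk1 ⟶ Qk1`, `p2 : Pk2 ⟶ Qk2` with `d'k1 ≫ p2 = p1 ≫ dk1`, such that the induced
morphism `ker d'k1 ⟶ ker dk1` is a strict epimorphism.  Then there are `Pk ∈ Ps`,
`d'k : Pk ⟶ Pk1` with `d'k ≫ d'k1 = 0` and a strict epimorphism `p0 : Pk ⟶ Qk` making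
the extended diagram commute, such that (a) the induced morphism `ker d'k ⟶ ker dk` is a
strict epimorphism, and (b) for every projective `P` the induced map of three-term
`Hom(P, −)`-complexes is an isomorphism on middle cohomology (kernel modulo image),
expressed elementwise. -/
theorem add_kill
    {C : Type u} [Category.{v} C] [Preadditive C]
    [HasFiniteLimits C] [HasFiniteColimits C] [QuasiAbelian C]
    (henough : HasEnoughStrictProjectives C)
    (Ps : Set C) (hPs : IsSufficientlyLarge Ps)
    {Qk Qk1 Qk2 Pk1 Pk2 : C}
    (dk : Qk ⟶ Qk1) (dk1 : Qk1 ⟶ Qk2) (hnull : dk ≫ dk1 = 0)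
    (d'k1 : Pk1 ⟶ Pk2) (p1 : Pk1 ⟶ Qk1) (p2 : Pk2 ⟶ Qk2)
    (hp1 : IsStrictEpi p1) (hp2 : IsStrictEpi p2)
    (hcomm : d'k1 ≫ p2 = p1 ≫ dk1)
    (hkerEpi : IsStrictEpi (kernel.lift dk1 (kernel.ι d'k1 ≫ p1)
      (by rw [Category.assoc, ← hcomm, ← Category.assoc, kernel.condition, zero_comp]))) :
    ∃ Pk : C, Pk ∈ Ps ∧
      ∃ (d'k : Pk ⟶ Pk1) (p0 : Pk ⟶ Qk) (hsq : d'k ≫ p1 = p0 ≫ dk),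
        d'k ≫ d'k1 = 0 ∧ IsStrictEpi p0 ∧
        -- (a) the induced morphism `ker d'k ⟶ ker dk` is a strict epimorphism
        IsStrictEpi (kernel.lift dk (kernel.ι d'k ≫ p0)
          (by rw [Category.assoc, ← hsq, ← Category.assoc, kernel.condition, zero_comp])) ∧
        -- (b) for every projective `P`, the map on middle cohomology of the
        -- `Hom(P, −)`-complexes is bijective (elementwise formulation)
        (∀ P : C, IsStrictProjective P →
          (∀ g : P ⟶ Qk1, g ≫ dk1 = 0 →
            ∃ (g' : P ⟶ Pk1) (h : P ⟶ Qk),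
              g' ≫ d'k1 = 0 ∧ g' ≫ p1 = g + h ≫ dk) ∧
          (∀ g' : P ⟶ Pk1, g' ≫ d'k1 = 0 →
            (∃ h : P ⟶ Qk, g' ≫ p1 = h ≫ dk) →
            ∃ h' : P ⟶ Pk, g' = h' ≫ d'k)) := by
  obtain ⟨κ, hκ, hκι⟩ : ∃ κ' : kernel d'k1 ⟶ kernel dk1,
      IsStrictEpi κ' ∧ κ' ≫ kernel.ι dk1 = kernel.ι d'k1 ≫ p1 :=
    ⟨_, hkerEpi, kernel.lift_ι _ _ _⟩
  obtain ⟨d0, hd0ι⟩ : ∃ d0' : Qk ⟶ kernel dk1, d0' ≫ kernel.ι dk1 = dk :=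
    ⟨kernel.lift dk1 dk hnull, kernel.lift_ι _ _ _⟩
  have hsnd : IsStrictEpi (pullback.snd κ d0) := QuasiAbelian.pullback_strictEpi κ d0 hκ
  obtain ⟨B, hB, hBproj, b, hb⟩ := AddKillAux.cover henough hPs (pullback κ d0)
  have key : pullback.fst κ d0 ≫ kernel.ι d'k1 ≫ p1 = pullback.snd κ d0 ≫ dk := by
    rw [← hκι, ← hd0ι]
    simp only [← Category.assoc]
    rw [pullback.condition]
  refine ⟨B, hB, b ≫ pullback.fst κ d0 ≫ kernel.ι d'k1, b ≫ pullback.snd κ d0, ?_, ?_, ?_, ?_, ?_⟩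
  · simp only [Category.assoc]; rw [key]
  · simp only [Category.assoc, kernel.condition, comp_zero]
  · exact AddKillAux.isStrictEpi_comp hb hsnd
  · -- (a)
    have hμw : (0 : kernel dk ⟶ kernel d'k1) ≫ κ = kernel.ι dk ≫ d0 := by
      rw [zero_comp]
      have h0 : (kernel.ι dk ≫ d0) ≫ kernel.ι dk1 = 0 := by
        rw [Category.assoc, hd0ι, kernel.condition]
      exact (zero_of_comp_mono (kernel.ι dk1) h0).symm
    have hW : IsStrictEpi (pullback.snd b (pullback.lift 0 (kernel.ι dk) hμw)) :=
      QuasiAbelian.pullback_strictEpi b _ hb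
    have hwd : pullback.fst b (pullback.lift 0 (kernel.ι dk) hμw) ≫
        b ≫ pullback.fst κ d0 ≫ kernel.ι d'k1 = 0 := by
      slice_lhs 1 2 => rw [pullback.condition]
      slice_lhs 2 3 => rw [pullback.lift_fst]
      simp
    have hcomp : kernel.lift (b ≫ pullback.fst κ d0 ≫ kernel.ι d'k1)
        (pullback.fst b (pullback.lift 0 (kernel.ι dk) hμw)) hwd ≫
        kernel.lift dk (kernel.ι (b ≫ pullback.fst κ d0 ≫ kernel.ι d'k1) ≫
          (b ≫ pullback.snd κ d0))
          (by
            simp only [Category.assoc]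
            rw [← key, reassoc_of% kernel.condition
              (b ≫ pullback.fst κ d0 ≫ kernel.ι d'k1), zero_comp]) =
        pullback.snd b (pullback.lift 0 (kernel.ι dk) hμw) := by
      apply (cancel_mono (kernel.ι dk)).mp
      rw [Category.assoc, kernel.lift_ι, ← Category.assoc, kernel.lift_ι]
      slice_lhs 1 2 => rw [pullback.condition]
      slice_lhs 2 3 => rw [pullback.lift_snd]
    exact AddKillAux.isStrictEpi_of_comp _ _ (hcomp ▸ hW)
  · -- (b)
    intro P hP
    constructor
    · intro g hg
      obtain ⟨u, hu⟩ := hP κ hκ (kernel.lift dk1 g hg)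
      refine ⟨u ≫ kernel.ι d'k1, 0, by rw [Category.assoc, kernel.condition, comp_zero], ?_⟩
      rw [zero_comp, add_zero, Category.assoc, ← hκι, ← Category.assoc, hu, kernel.lift_ι]
    · rintro g' hg' ⟨h, hh⟩
      have huκ : kernel.lift d'k1 g' hg' ≫ κ = h ≫ d0 := by
        apply (cancel_mono (kernel.ι dk1)).mp
        rw [Category.assoc, Category.assoc, hκι, hd0ι, ← Category.assoc, kernel.lift_ι]
        exact hh
      obtain ⟨v, hv⟩ := hP b hb (pullback.lift (kernel.lift d'k1 g' hg') h huκ)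
      refine ⟨v, ?_⟩
      have hfin : v ≫ b ≫ pullback.fst κ d0 ≫ kernel.ι d'k1 = g' := by
        slice_lhs 1 2 => rw [hv]
        slice_lhs 1 2 => rw [pullback.lift_fst]
        rw [kernel.lift_ι]
      exact hfin.symm
end
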